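/- If X̃₁ and X̃₂ are fuzzy incidence graphs in which every pair is effective, then their tensor product X̃ = X̃₁ ⋄ X̃₂ is a fuzzy incidence graph in which every pair is effective. -/

import Mathlib

open scoped BigOperators

/-- A fuzzy incidence graph on a finite vertex type `V`.  An (undirected, loopless) edge `xy`
is encoded by the symmetric membership function `rho`, and the incidence pair `(x, xy)`
is encoded by `eta x y` (so `eta x y` is the membership value of the pair consisting of the
vertex `x` and the edge joining `x` and `y`). All membership values lie in `[0,1]`,
`rho xy ≤ min (eps x) (eps y)` and `eta (x, xy) ≤ min (eps x) (rho xy)`. -/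
structure FIG (V : Type) [Fintype V] [DecidableEq V] where
  eps : V → ℝ
  rho : V → V → ℝ
  eta : V → V → ℝ
  eps_nonneg : ∀ x, 0 ≤ eps x
  eps_le_one : ∀ x, eps x ≤ 1
  rho_nonneg : ∀ x y, 0 ≤ rho x y
  rho_symm : ∀ x y, rho x y = rho y x
  rho_le : ∀ x y, rho x y ≤ min (eps x) (eps y)
  rho_irrefl : ∀ x, rho x x = 0
  eta_nonneg : ∀ x y, 0 ≤ eta x y
  eta_le : ∀ x y, eta x y ≤ min (eps x) (rho x y)

namespace FIG

variable {V V₁ V₂ : Type} [Fintype V] [DecidableEq V]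
  [Fintype V₁] [DecidableEq V₁] [Fintype V₂] [DecidableEq V₂]

/-- `(x, xy)` is a pair of the fuzzy incidence graph (i.e. belongs to the support `η*`). -/
def IsPair (G : FIG V) (x y : V) : Prop := 0 < G.eta x y

/-- the minimum of the two pair weights along one edge step of an incidence path -/
def pairMin (G : FIG V) (a b : V) : ℝ := min (G.eta a b) (G.eta b a)

/-- the minimum of the pair weights along the internal steps of a vertex list -/
def chainStrength (G : FIG V) : List V → ℝ
  | [] => 1
  | [_] => 1
  | a :: b :: l => min (G.pairMin a b) (G.chainStrength (b :: l))

/-- The set of incidence strengths of incidence paths from the vertex `x` to the edge `yz`: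
a path is recorded by its (pairwise distinct) sequence of vertices, starting at `x` and ending
at an endpoint of the edge `yz`; its strength is the minimum of the weights of its pairs
(pairs of weight `0` are not genuine pairs, but a list using them has strength `0`, so
including such lists does not alter the supremum below). -/
def pathStrengths (G : FIG V) (x y z : V) : Set ℝ :=
  {s | ∃ l : List V, l.Nodup ∧ l.head? = some x ∧
      ((l.getLast? = some y ∧ s = min (G.chainStrength l) (G.eta y z)) ∨
       (l.getLast? = some z ∧ s = min (G.chainStrength l) (G.eta z y)))}

/-- `ICONN G x y z` is the greatest incidence strength of an incidence path from the
vertex `x` to the edge `yz` (the incidence connectivity `ICONN_G (x, yz)`). -/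
noncomputable def ICONN (G : FIG V) (x y z : V) : ℝ := sSup (G.pathStrengths x y z)

/-- the fuzzy incidence graph obtained by deleting the pair `(a, ab)` -/
def deletePair (G : FIG V) (a b : V) : FIG V where
  eps := G.eps
  rho := G.rho
  eta := fun u v => if u = a ∧ v = b then 0 else G.eta u v
  eps_nonneg := G.eps_nonneg
  eps_le_one := G.eps_le_one
  rho_nonneg := G.rho_nonneg
  rho_symm := G.rho_symm
  rho_le := G.rho_le
  rho_irrefl := G.rho_irrefl
  eta_nonneg := by
    intro u v; (try dsimp only); split
    · exact le_refl 0
    · exact G.eta_nonneg u v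
  eta_le := by
    intro u v; (try dsimp only); split
    · exact le_min (G.eps_nonneg u) (G.rho_nonneg u v)
    · exact G.eta_le u v

/-- The pair `(x, xy)` is strong: its weight is at least the incidence connectivity
between `x` and the edge `xy` in the graph obtained by deleting the pair `(x, xy)`. -/
def IsStrongPair (G : FIG V) (x y : V) : Prop :=
  (G.deletePair x y).ICONN x x y ≤ G.eta x y

/-- a strong fuzzy incidence graph: every pair is strong -/
def Strong (G : FIG V) : Prop := ∀ x y, G.IsPair x y → G.IsStrongPair x y

/-- The pair `(x, xy)` is effective: `η(x, xy) = min (ε x) (ρ xy)`. -/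
def EffectivePair (G : FIG V) (x y : V) : Prop :=
  G.eta x y = min (G.eps x) (G.rho x y)

/-- a fuzzy incidence graph in which every pair is effective -/
def EffectivePairs (G : FIG V) : Prop := ∀ x y, G.IsPair x y → G.EffectivePair x y

/-- The tensor product of two fuzzy incidence graphs: `(a₁,b₁)(a₂,b₂)` is an edge when
`a₁a₂ ∈ E₁` and `b₁b₂ ∈ E₂`; a pair of the product exists when all four corresponding
pairs of the factors exist, with weight `min (η₁ (a₁,a₁a₂)) (η₂ (b₁,b₁b₂))`. -/
noncomputable def tensor (G₁ : FIG V₁) (G₂ : FIG V₂) : FIG (V₁ × V₂) where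
  eps := fun p => min (G₁.eps p.1) (G₂.eps p.2)
  rho := fun p q => min (G₁.rho p.1 q.1) (G₂.rho p.2 q.2)
  eta := fun p q =>
    if 0 < G₁.eta p.1 q.1 ∧ 0 < G₁.eta q.1 p.1 ∧ 0 < G₂.eta p.2 q.2 ∧ 0 < G₂.eta q.2 p.2
    then min (G₁.eta p.1 q.1) (G₂.eta p.2 q.2) else 0
  eps_nonneg := fun p => le_min (G₁.eps_nonneg p.1) (G₂.eps_nonneg p.2)
  eps_le_one := fun p => min_le_of_left_le (G₁.eps_le_one p.1)
  rho_nonneg := fun p q => le_min (G₁.rho_nonneg _ _) (G₂.rho_nonneg _ _)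
  rho_symm := fun p q => by
    (try dsimp only); rw [G₁.rho_symm p.1 q.1, G₂.rho_symm p.2 q.2]
  rho_le := by
    intro p q; (try dsimp only)
    refine le_min (le_min (min_le_of_left_le ?_) (min_le_of_right_le ?_))
      (le_min (min_le_of_left_le ?_) (min_le_of_right_le ?_))
    · exact le_trans (G₁.rho_le p.1 q.1) (min_le_left _ _)
    · exact le_trans (G₂.rho_le p.2 q.2) (min_le_left _ _)
    · exact le_trans (G₁.rho_le p.1 q.1) (min_le_right _ _)
    · exact le_trans (G₂.rho_le p.2 q.2) (min_le_right _ _)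
  rho_irrefl := by
    intro p; (try dsimp only)
    rw [G₁.rho_irrefl, G₂.rho_irrefl]
    exact min_self 0
  eta_nonneg := by
    intro p q; (try dsimp only); split
    · exact le_min (G₁.eta_nonneg _ _) (G₂.eta_nonneg _ _)
    · exact le_refl 0
  eta_le := by
    intro p q; (try dsimp only); split
    · refine le_min (le_min (min_le_of_left_le ?_) (min_le_of_right_le ?_))
        (le_min (min_le_of_left_le ?_) (min_le_of_right_le ?_))
      · exact le_trans (G₁.eta_le p.1 q.1) (min_le_left _ _)
      · exact le_trans (G₂.eta_le p.2 q.2) (min_le_left _ _)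
      · exact le_trans (G₁.eta_le p.1 q.1) (min_le_right _ _)
      · exact le_trans (G₂.eta_le p.2 q.2) (min_le_right _ _)
    · exact le_min (le_min (G₁.eps_nonneg _) (G₂.eps_nonneg _))
        (le_min (G₁.rho_nonneg _ _) (G₂.rho_nonneg _ _))

section

variable {G₁ : FIG V₁} {G₂ : FIG V₂} {p q : V₁ × V₂}

theorem isPair_tensor_iff :
    (G₁.tensor G₂).IsPair p q ↔
      G₁.IsPair p.1 q.1 ∧ G₁.IsPair q.1 p.1 ∧ G₂.IsPair p.2 q.2 ∧ G₂.IsPair q.2 p.2 := by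
  unfold IsPair tensor
  dsimp only
  split_ifs with h
  · exact ⟨fun _ => h, fun _ => lt_min h.1 h.2.2.1⟩
  · exact iff_of_false (lt_irrefl 0) h

theorem tensor_eta_of_isPair (h : (G₁.tensor G₂).IsPair p q) :
    (G₁.tensor G₂).eta p q = min (G₁.eta p.1 q.1) (G₂.eta p.2 q.2) :=
  if_pos (isPair_tensor_iff.mp h)

end

/-- **Theorem 30.** The tensor product of two fuzzy incidence graphs with effective
pairs is a fuzzy incidence graph with effective pairs. -/
theorem tensor_effectivePairs (G₁ : FIG V₁) (G₂ : FIG V₂)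
    (h₁ : G₁.EffectivePairs) (h₂ : G₂.EffectivePairs) :
    (G₁.tensor G₂).EffectivePairs := by
  intro p q hp
  obtain ⟨hp₁, -, hp₂, -⟩ := isPair_tensor_iff.mp hp
  rw [EffectivePair, tensor_eta_of_isPair hp, h₁ _ _ hp₁, h₂ _ _ hp₂]
  exact min_min_min_comm _ _ _ _

end FIG
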